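/- arXiv:0906.1559 — 4 statements merged into one kernel-verified Lean document; each statement's English description precedes it below -/
import Mathlib

section
/- The number of ℓ-core partitions whose largest part equals k is the binomial coefficient C(k + ℓ - 2, k). -/
/-!
Transposing, we count `ℓ`-cores with `k` rows instead. Such a diagram is determined by its beta
set, the `k` first-column hook lengths, which can be any `k`-element set of positive integers.
The hook lengths in row `a` are the differences `hookLen μ a 0 - g` for the gaps
`g < hookLen μ a 0`, the naturals outside the beta set; hence `μ` is an `ℓ`-core iff its beta set
is closed under `x ↦ x - ℓ`. On an abacus with `ℓ` runners such a set has its beads pushed to the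
top of each runner and none on runner `0`, so it is determined by the bead counts on the other
`ℓ - 1` runners, which sum to `k`; stars and bars gives `C(k + ℓ - 2, k)`.
-/

/-- The hook length of the box `(a, b)` (0-indexed row `a`, column `b`)
of the Young diagram `μ`: the number of boxes to the right in its row,
plus the number of boxes below in its column, plus one. -/
def hookLen (μ : YoungDiagram) (a b : ℕ) : ℕ :=
  μ.rowLen a + μ.colLen b - a - b - 1

/-- A partition (Young diagram) is an `ℓ`-core when no box has hook length
divisible by `ℓ`. -/
def IsCore (ℓ : ℕ) (μ : YoungDiagram) : Prop :=
  ∀ a b : ℕ, (a, b) ∈ μ → ¬ ℓ ∣ hookLen μ a b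

open Finset

def ClosedUnderSub (ℓ : ℕ) (B : Finset ℕ) : Prop := ∀ x ∈ B, ℓ ≤ x → x - ℓ ∈ B

namespace ClosedUnderSub

variable {ℓ : ℕ} {B : Finset ℕ}

theorem sub_mul_mem (hB : ClosedUnderSub ℓ B) {x : ℕ} (hx : x ∈ B) (m : ℕ) (hm : ℓ * m ≤ x) :
    x - ℓ * m ∈ B := by
  induction m with
  | zero => simpa
  | succ m ih =>
    rw [Nat.mul_succ] at hm ⊢
    rw [← Nat.sub_sub]
    exact hB _ (ih (by omega)) (by omega)

theorem mod_ne_zero (hB : ClosedUnderSub ℓ B) (h0 : 0 ∉ B) {x : ℕ} (hx : x ∈ B) : x % ℓ ≠ 0 := by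
  intro hmod
  have hx_eq : ℓ * (x / ℓ) = x := Nat.mul_div_cancel' (Nat.dvd_of_mod_eq_zero hmod)
  exact h0 (by simpa [hx_eq] using hB.sub_mul_mem hx (x / ℓ) hx_eq.le)

/-- Each residue class of a set closed under subtracting `ℓ` is an initial segment
`{r, r + ℓ, r + 2ℓ, …}` of that class, so membership is decided by its size. -/
theorem mem_iff_div_lt_card (hB : ClosedUnderSub ℓ B) (hℓ : 0 < ℓ) (x : ℕ) :
    x ∈ B ↔ x / ℓ < #{y ∈ B | y % ℓ = x % ℓ} := by
  have hdiv := Nat.mod_add_div x ℓ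
  constructor
  · intro hx
    have hcard := card_le_card_of_injOn (s := range (x / ℓ + 1))
      (t := {y ∈ B | y % ℓ = x % ℓ}) (fun m => x - ℓ * m) ?_ ?_
    · simpa using hcard
    · intro m hm
      have hm : ℓ * m ≤ x := by
        have := Nat.mul_le_mul_left ℓ (Nat.lt_succ_iff.mp (mem_range.mp hm)); omega
      simp only [coe_filter, Set.mem_ofPred_eq]
      exact ⟨hB.sub_mul_mem hx m hm, Nat.sub_mul_mod hm⟩
    · intro m hm m' hm' h
      have hm := Nat.mul_le_mul_left ℓ (Nat.lt_succ_iff.mp (mem_range.mp hm))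
      have hm' := Nat.mul_le_mul_left ℓ (Nat.lt_succ_iff.mp (mem_range.mp hm'))
      exact Nat.eq_of_mul_eq_mul_left hℓ (by simp only at h; omega)
  · intro hlt
    by_contra hx
    -- an element `y` of the class with `y / ℓ ≥ x / ℓ` would put `x = y - ℓ * (y / ℓ - x / ℓ)` in `B`
    have hcard := card_le_card_of_injOn (s := {y ∈ B | y % ℓ = x % ℓ})
      (t := range (x / ℓ)) (· / ℓ) ?_ ?_
    · simp only [card_range] at hcard; omega
    · intro y hy
      simp only [coe_filter, Set.mem_ofPred_eq] at hy
      simp only [coe_range, Set.mem_Iio]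
      by_contra hge
      have hy_div := Nat.mod_add_div y ℓ
      have hmul : ℓ * (x / ℓ) ≤ ℓ * (y / ℓ) := Nat.mul_le_mul_left ℓ (not_lt.mp hge)
      have hle : ℓ * (y / ℓ - x / ℓ) ≤ y := by rw [Nat.mul_sub]; omega
      have := hB.sub_mul_mem hy.1 _ hle
      rw [Nat.mul_sub] at this
      exact hx (by convert this using 1; omega)
    · intro y hy y' hy' h
      simp only [coe_filter, Set.mem_ofPred_eq] at hy hy'
      rw [← Nat.mod_add_div y ℓ, ← Nat.mod_add_div y' ℓ, hy.2, hy'.2]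
      exact congrArg (x % ℓ + ℓ * ·) h

end ClosedUnderSub

theorem StrictMono.add_le_fin {n : ℕ} {f : Fin n → ℕ} (hf : StrictMono f) (i : Fin n) (d : ℕ)
    (h : i + d < n) : f i + d ≤ f ⟨i + d, h⟩ := by
  induction d with
  | zero => simp
  | succ d ih =>
    have := ih (by omega)
    have := @hf ⟨i + d, by omega⟩ ⟨i + (d + 1), h⟩ (Fin.mk_lt_mk.mpr (by omega))
    omega

theorem StrictMono.antitone_rev_sub {n : ℕ} {f : Fin n → ℕ} (hf : StrictMono f) :
    Antitone fun i : Fin n => f i.rev - i.rev := by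
  intro i j hij
  have hrev : (j.rev : ℕ) + (i.rev - j.rev) < n := by omega
  have := hf.add_le_fin j.rev (i.rev - j.rev) hrev
  have hji : (⟨j.rev + (i.rev - j.rev), hrev⟩ : Fin n) = i.rev := by
    ext; simp only [Fin.val_rev] at *; omega
  rw [hji] at this
  simp only [Fin.val_rev] at *
  omega

theorem Finset.add_one_le_orderEmbOfFin {B : Finset ℕ} (h0 : 0 ∉ B) (j : Fin #B) :
    (j : ℕ) + 1 ≤ B.orderEmbOfFin rfl j := by
  have hpos : 0 < #B := j.pos
  have h := (B.orderEmbOfFin rfl).strictMono.add_le_fin ⟨0, hpos⟩ j (by simp)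
  have hne : B.orderEmbOfFin rfl ⟨0, hpos⟩ ≠ 0 := fun h => h0 (h ▸ B.orderEmbOfFin_mem rfl _)
  simp only [zero_add, Fin.eta] at h
  omega

namespace YoungDiagram

variable {μ : YoungDiagram} {ℓ a b : ℕ}

theorem lt_rowLen_iff_lt_colLen {i j : ℕ} : j < μ.rowLen i ↔ i < μ.colLen j := by
  rw [← mem_iff_lt_rowLen, mem_iff_lt_colLen]

theorem colLen_le_colLen_zero (μ : YoungDiagram) (j : ℕ) : μ.colLen j ≤ μ.colLen 0 :=
  μ.colLen_anti 0 j j.zero_le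

theorem ext_of_rowLen {ν : YoungDiagram} (h : ∀ i, μ.rowLen i = ν.rowLen i) : μ = ν := by
  ext ⟨i, j⟩
  simp only [mem_cells, mem_iff_lt_rowLen, h]

theorem hookLen_pos (h : (a, b) ∈ μ) : 0 < hookLen μ a b := by
  have := mem_iff_lt_rowLen.mp h
  have := mem_iff_lt_colLen.mp h
  simp only [hookLen]; omega

theorem hookLen_transpose (μ : YoungDiagram) (a b : ℕ) :
    hookLen μ.transpose a b = hookLen μ b a := by
  simp only [hookLen, rowLen_transpose, colLen_transpose]
  omega

theorem isCore_transpose_iff : IsCore ℓ μ.transpose ↔ IsCore ℓ μ := by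
  suffices ∀ ν : YoungDiagram, IsCore ℓ ν → IsCore ℓ ν.transpose from
    ⟨fun h => μ.transpose_transpose ▸ this _ h, this μ⟩
  intro ν hν a b hab
  rw [hookLen_transpose]
  exact hν b a (mem_transpose.mp hab)

theorem hookLen_zero_strictAntiOn :
    StrictAntiOn (hookLen μ · 0) (Set.Iio (μ.colLen 0)) := by
  intro i _ j hj hij
  rw [Set.mem_Iio] at hj
  have := μ.rowLen_anti i j hij.le
  have := lt_rowLen_iff_lt_colLen.mpr hj
  simp only [hookLen]; omega

/-- The common value of `hookLen μ a 0 - hookLen μ a b` over the boxes `(a, b)` of column `b`;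
the gaps are exactly the naturals that are not first-column hook lengths. -/
def gap (μ : YoungDiagram) (b : ℕ) : ℕ := b + μ.colLen 0 - μ.colLen b

theorem gap_add_hookLen (h : (a, b) ∈ μ) : μ.gap b + hookLen μ a b = hookLen μ a 0 := by
  have := mem_iff_lt_rowLen.mp h
  have := mem_iff_lt_colLen.mp h
  have := μ.colLen_le_colLen_zero b
  simp only [hookLen, gap]; omega

theorem gap_strictMono : StrictMono μ.gap := by
  intro b b' h
  have := μ.colLen_anti b b' h.le
  have := μ.colLen_le_colLen_zero b
  simp only [gap]; omega

theorem gap_ne_hookLen_zero {i : ℕ} (hi : i < μ.colLen 0) (b : ℕ) : μ.gap b ≠ hookLen μ i 0 := by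
  have := μ.colLen_le_colLen_zero b
  have := lt_rowLen_iff_lt_colLen.mpr hi
  have hbox : b < μ.rowLen i ↔ i < μ.colLen b := lt_rowLen_iff_lt_colLen
  simp only [gap, hookLen]; omega

def betaSet (μ : YoungDiagram) : Finset ℕ := (range (μ.colLen 0)).image (hookLen μ · 0)

theorem mem_betaSet {x : ℕ} : x ∈ μ.betaSet ↔ ∃ i < μ.colLen 0, hookLen μ i 0 = x := by
  simp [betaSet]

theorem card_betaSet (μ : YoungDiagram) : #μ.betaSet = μ.colLen 0 := by
  rw [betaSet, card_image_of_injOn (hookLen_zero_strictAntiOn.injOn.mono (by simp)), card_range]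

theorem zero_notMem_betaSet (μ : YoungDiagram) : 0 ∉ μ.betaSet := by
  simp only [mem_betaSet, not_exists, not_and]
  intro i hi
  exact (hookLen_pos (mem_iff_lt_colLen.mpr hi)).ne'

theorem image_gap_union_image_hookLen (ha : a < μ.colLen 0) :
    (range (μ.rowLen a)).image μ.gap ∪ (Ioo a (μ.colLen 0)).image (hookLen μ · 0) =
      range (hookLen μ a 0) := by
  refine eq_of_subset_of_card_le (union_subset ?_ ?_) ?_
  · simp only [image_subset_iff, mem_range]
    intro b hb
    have hab : (a, b) ∈ μ := mem_iff_lt_rowLen.mpr hb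
    have := gap_add_hookLen hab
    have := hookLen_pos hab
    omega
  · simp only [image_subset_iff, mem_Ioo, mem_range, and_imp]
    intro i hai hi
    exact hookLen_zero_strictAntiOn ha hi hai
  · have hdisj : Disjoint ((range (μ.rowLen a)).image μ.gap)
        ((Ioo a (μ.colLen 0)).image (hookLen μ · 0)) := by
      rw [disjoint_left]
      rintro _ hgap hhook
      obtain ⟨b, -, rfl⟩ := mem_image.mp hgap
      obtain ⟨i, hi, hib⟩ := mem_image.mp hhook
      exact gap_ne_hookLen_zero (mem_Ioo.mp hi).2 b hib.symm
    rw [card_union_of_disjoint hdisj, card_image_of_injective _ gap_strictMono.injective,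
      card_image_of_injOn (hookLen_zero_strictAntiOn.injOn.mono fun i hi => (mem_Ioo.mp hi).2),
      card_range, Nat.card_Ioo, card_range]
    have := lt_rowLen_iff_lt_colLen.mpr ha
    simp only [hookLen]; omega

theorem exists_hookLen_eq {x : ℕ} (ha : a < μ.colLen 0) (hx : 0 < x) (hxa : x ≤ hookLen μ a 0)
    (hnot : hookLen μ a 0 - x ∉ μ.betaSet) : ∃ b, (a, b) ∈ μ ∧ hookLen μ a b = x := by
  have hmem : hookLen μ a 0 - x ∈ range (hookLen μ a 0) := mem_range.mpr (by omega)
  rw [← image_gap_union_image_hookLen ha, mem_union] at hmem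
  rcases hmem with hgap | hbeta
  · obtain ⟨b, hb, hgap⟩ := mem_image.mp hgap
    have hab : (a, b) ∈ μ := mem_iff_lt_rowLen.mpr (mem_range.mp hb)
    have := gap_add_hookLen hab
    exact ⟨b, hab, by omega⟩
  · obtain ⟨i, hi, hix⟩ := mem_image.mp hbeta
    exact absurd (mem_betaSet.mpr ⟨i, (mem_Ioo.mp hi).2, hix⟩) hnot

theorem isCore_iff_closedUnderSub_betaSet : IsCore ℓ μ ↔ ClosedUnderSub ℓ μ.betaSet := by
  constructor
  · intro hcore x hx hℓx
    by_contra hnot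
    obtain ⟨a, ha, rfl⟩ := mem_betaSet.mp hx
    rcases Nat.eq_zero_or_pos ℓ with rfl | hℓ
    · exact hnot (by simpa using hx)
    obtain ⟨b, hab, hhook⟩ := exists_hookLen_eq ha hℓ hℓx hnot
    exact hcore a b hab (hhook ▸ dvd_rfl)
  · rintro hB a b hab ⟨m, hm⟩
    -- subtracting `hookLen μ a b = ℓ * m` from a beta number lands on a gap
    have hsum := gap_add_hookLen hab
    have ha : a < μ.colLen 0 := mem_iff_lt_colLen.mp (μ.up_left_mem le_rfl b.zero_le hab)
    have hmem := hB.sub_mul_mem (mem_betaSet.mpr ⟨a, ha, rfl⟩) m (by omega)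
    obtain ⟨i, hi, hhook⟩ := mem_betaSet.mp hmem
    exact gap_ne_hookLen_zero hi b (by omega)

variable {B : Finset ℕ}

/-- Row `i` has length `β - #{x ∈ B | x < β}`, where `β` is the `i`-th largest element of `B`;
this inverts `betaSet`. -/
def ofBetaSet (B : Finset ℕ) : YoungDiagram :=
  ofRowLens (List.ofFn fun i : Fin #B => B.orderEmbOfFin rfl i.rev - i.rev)
    (List.sortedGE_ofFn_iff.mpr (B.orderEmbOfFin rfl).strictMono.antitone_rev_sub)

theorem rowLen_ofBetaSet (i : Fin #B) :
    (ofBetaSet B).rowLen i = B.orderEmbOfFin rfl i.rev - i.rev :=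
  (rowLen_ofRowLens (i.cast List.length_ofFn.symm)).trans (List.getElem_ofFn _)

theorem rowLen_ofBetaSet_of_card_le {i : ℕ} (hi : #B ≤ i) : (ofBetaSet B).rowLen i = 0 := by
  by_contra h
  have hmem : (i, 0) ∈ ofBetaSet B := mem_iff_lt_rowLen.mpr (Nat.pos_of_ne_zero h)
  simp only [ofBetaSet, mem_ofRowLens, List.length_ofFn] at hmem
  exact absurd hmem.1 (not_lt.mpr hi)

theorem colLen_ofBetaSet (h0 : 0 ∉ B) : (ofBetaSet B).colLen 0 = #B := by
  rw [← length_rowLens, ofBetaSet, rowLens_length_ofRowLens, List.length_ofFn]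
  simp only [List.mem_ofFn, forall_exists_index, forall_apply_eq_imp_iff]
  intro i
  have := add_one_le_orderEmbOfFin h0 i.rev
  omega

theorem hookLen_ofBetaSet (h0 : 0 ∉ B) (i : Fin #B) :
    hookLen (ofBetaSet B) i 0 = B.orderEmbOfFin rfl i.rev := by
  have := add_one_le_orderEmbOfFin h0 i.rev
  rw [hookLen, rowLen_ofBetaSet, colLen_ofBetaSet h0]
  simp only [Fin.val_rev] at *
  omega

theorem betaSet_ofBetaSet (h0 : 0 ∉ B) : (ofBetaSet B).betaSet = B := by
  ext x
  rw [mem_betaSet, colLen_ofBetaSet h0, ← mem_coe, ← range_orderEmbOfFin B rfl]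
  constructor
  · rintro ⟨i, hi, rfl⟩
    exact ⟨(⟨i, hi⟩ : Fin #B).rev, (hookLen_ofBetaSet h0 ⟨i, hi⟩).symm⟩
  · rintro ⟨j, rfl⟩
    exact ⟨j.rev, j.rev.isLt, by rw [hookLen_ofBetaSet h0 j.rev, Fin.rev_rev]⟩

theorem ofBetaSet_betaSet (μ : YoungDiagram) : ofBetaSet μ.betaSet = μ := by
  have hcard := μ.card_betaSet
  have henum : (fun j : Fin #μ.betaSet => hookLen μ j.rev 0) = μ.betaSet.orderEmbOfFin rfl :=
    orderEmbOfFin_unique rfl (fun j => mem_betaSet.mpr ⟨j.rev, hcard ▸ j.rev.isLt, rfl⟩)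
      fun j j' hjj' => hookLen_zero_strictAntiOn (Set.mem_Iio.mpr (hcard ▸ j'.rev.isLt))
        (Set.mem_Iio.mpr (hcard ▸ j.rev.isLt))
        (Fin.rev_lt_rev.mpr hjj')
  refine ext_of_rowLen fun i => ?_
  rcases lt_or_ge i #μ.betaSet with hi | hi
  · have hrow := rowLen_ofBetaSet (B := μ.betaSet) ⟨i, hi⟩
    rw [← henum] at hrow
    simp only [Fin.rev_rev, Fin.val_rev] at hrow
    have := lt_rowLen_iff_lt_colLen.mpr (hcard ▸ hi)
    rw [hrow, hookLen]
    omega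
  · rw [rowLen_ofBetaSet_of_card_le hi, eq_comm, ← Nat.le_zero, ← not_lt,
      lt_rowLen_iff_lt_colLen, ← hcard]
    exact hi.not_gt

theorem bijOn_betaSet (ℓ k : ℕ) :
    Set.BijOn betaSet {μ | IsCore ℓ μ ∧ μ.colLen 0 = k}
      {B | 0 ∉ B ∧ ClosedUnderSub ℓ B ∧ #B = k} := by
  refine Set.InvOn.bijOn
    ⟨fun μ _ => ofBetaSet_betaSet μ, fun B hB => betaSet_ofBetaSet hB.1⟩ ?_ ?_
  · rintro μ ⟨hcore, hk⟩
    exact ⟨μ.zero_notMem_betaSet, isCore_iff_closedUnderSub_betaSet.mp hcore,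
      μ.card_betaSet.trans hk⟩
  · rintro B ⟨h0, hB, hk⟩
    refine ⟨isCore_iff_closedUnderSub_betaSet.mpr ?_, (colLen_ofBetaSet h0).trans hk⟩
    rwa [betaSet_ofBetaSet h0]

end YoungDiagram

section Abacus

variable {ℓ : ℕ}

/-- The number of beads of `B` on runner `t` of the `ℓ`-abacus, which carries the residue class
of `t + 1`; runner `0`, the multiples of `ℓ`, is omitted. -/
def runnerCount (ℓ : ℕ) (B : Finset ℕ) (t : Fin (ℓ - 1)) : ℕ := #{x ∈ B | x % ℓ = t + 1}

/-- The `ℓ`-abacus with `c t` beads, pushed to the top, on runner `t`. -/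
def ofRunnerCounts (ℓ : ℕ) (c : Fin (ℓ - 1) → ℕ) : Finset ℕ :=
  univ.biUnion fun t => (range (c t)).image (t + 1 + ℓ * ·)

theorem Fin.add_one_add_mul_mod (t : Fin (ℓ - 1)) (j : ℕ) : (t + 1 + ℓ * j) % ℓ = t + 1 := by
  rw [Nat.add_mul_mod_self_left, Nat.mod_eq_of_lt (by have := t.isLt; omega)]

theorem Fin.add_one_add_mul_div (t : Fin (ℓ - 1)) (j : ℕ) : (t + 1 + ℓ * j) / ℓ = j := by
  have := t.isLt
  rw [Nat.add_mul_div_left _ _ (by omega), Nat.div_eq_of_lt (by omega), zero_add]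

theorem mem_ofRunnerCounts_iff {c : Fin (ℓ - 1) → ℕ} {x : ℕ} :
    x ∈ ofRunnerCounts ℓ c ↔ ∃ t j, j < c t ∧ t + 1 + ℓ * j = x := by
  simp [ofRunnerCounts]

theorem add_one_add_mul_mem_ofRunnerCounts {c : Fin (ℓ - 1) → ℕ} {t : Fin (ℓ - 1)} {j : ℕ} :
    t + 1 + ℓ * j ∈ ofRunnerCounts ℓ c ↔ j < c t := by
  refine mem_ofRunnerCounts_iff.trans ⟨?_, fun hj => ⟨t, j, hj, rfl⟩⟩
  rintro ⟨t', j', hj', heq⟩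
  have hmod := congrArg (· % ℓ) heq
  have hdiv := congrArg (· / ℓ) heq
  simp only [Fin.add_one_add_mul_mod, Fin.add_one_add_mul_div] at hmod hdiv
  obtain rfl : t' = t := Fin.ext (by omega)
  exact hdiv ▸ hj'

theorem zero_notMem_ofRunnerCounts (c : Fin (ℓ - 1) → ℕ) : 0 ∉ ofRunnerCounts ℓ c := by
  simp [mem_ofRunnerCounts_iff]

theorem closedUnderSub_ofRunnerCounts (c : Fin (ℓ - 1) → ℕ) :
    ClosedUnderSub ℓ (ofRunnerCounts ℓ c) := by
  intro x hx hℓx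
  obtain ⟨t, j, hj, rfl⟩ := mem_ofRunnerCounts_iff.mp hx
  have ht := t.isLt
  have hj0 : j ≠ 0 := by rintro rfl; omega
  obtain ⟨j, rfl⟩ := Nat.exists_eq_succ_of_ne_zero hj0
  exact mem_ofRunnerCounts_iff.mpr ⟨t, j, by omega, by rw [Nat.mul_succ]; omega⟩

theorem runnerCount_ofRunnerCounts (c : Fin (ℓ - 1) → ℕ) :
    runnerCount ℓ (ofRunnerCounts ℓ c) = c := by
  funext t
  refine eq_of_forall_lt_iff fun j => ?_
  have := (closedUnderSub_ofRunnerCounts c).mem_iff_div_lt_card (by have := t.isLt; omega)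
    (t + 1 + ℓ * j)
  rw [add_one_add_mul_mem_ofRunnerCounts, Fin.add_one_add_mul_mod,
    Fin.add_one_add_mul_div] at this
  exact this.symm

theorem sum_runnerCount (hℓ : 0 < ℓ) {B : Finset ℕ} (hB : ∀ x ∈ B, x % ℓ ≠ 0) :
    ∑ t, runnerCount ℓ B t = #B := by
  rw [card_eq_sum_card_fiberwise (f := (· % ℓ)) (t := range ℓ)
    fun x _ => mem_range.mpr (Nat.mod_lt x hℓ)]
  obtain ⟨m, rfl⟩ : ∃ m, ℓ = m + 1 := ⟨ℓ - 1, by omega⟩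
  have hzero : #{x ∈ B | x % (m + 1) = 0} = 0 := by
    simpa [filter_eq_empty_iff] using hB
  rw [sum_range_succ', hzero, add_zero]
  exact Fin.sum_univ_eq_sum_range (fun i => #{x ∈ B | x % (m + 1) = i + 1}) m

namespace ClosedUnderSub

variable {B : Finset ℕ}

theorem ofRunnerCounts_runnerCount (hB : ClosedUnderSub ℓ B) (h0 : 0 ∉ B) (hℓ : 0 < ℓ) :
    ofRunnerCounts ℓ (runnerCount ℓ B) = B := by
  ext x
  constructor
  · intro hx
    obtain ⟨t, j, hj, rfl⟩ := mem_ofRunnerCounts_iff.mp hx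
    rw [hB.mem_iff_div_lt_card hℓ, Fin.add_one_add_mul_mod, Fin.add_one_add_mul_div]
    exact hj
  · intro hx
    have hmod := hB.mod_ne_zero h0 hx
    have hlt := Nat.mod_lt x hℓ
    let t : Fin (ℓ - 1) := ⟨x % ℓ - 1, by omega⟩
    have ht : x % ℓ = t + 1 := by simp only [t]; omega
    have hx_eq : t + 1 + ℓ * (x / ℓ) = x := ht ▸ Nat.mod_add_div x ℓ
    rw [← hx_eq, add_one_add_mul_mem_ofRunnerCounts]
    have := (hB.mem_iff_div_lt_card hℓ x).mp hx
    rwa [ht] at this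

end ClosedUnderSub

theorem bijOn_runnerCount (hℓ : 0 < ℓ) (k : ℕ) :
    Set.BijOn (runnerCount ℓ) {B | 0 ∉ B ∧ ClosedUnderSub ℓ B ∧ #B = k}
      {c | ∑ t, c t = k} := by
  refine Set.InvOn.bijOn ⟨fun B hB => hB.2.1.ofRunnerCounts_runnerCount hB.1 hℓ,
    fun c _ => runnerCount_ofRunnerCounts c⟩ ?_ ?_
  · rintro B ⟨h0, hB, hk⟩
    exact (sum_runnerCount hℓ fun x => hB.mod_ne_zero h0).trans hk
  · intro c hk
    refine ⟨zero_notMem_ofRunnerCounts c, closedUnderSub_ofRunnerCounts c, ?_⟩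
    rw [← sum_runnerCount hℓ fun x hx => (closedUnderSub_ofRunnerCounts c).mod_ne_zero
      (zero_notMem_ofRunnerCounts c) hx, runnerCount_ofRunnerCounts]
    exact hk

end Abacus

/-- The number of `ℓ`-core partitions whose largest part equals `k`
is the binomial coefficient `C(k + ℓ - 2, k)`. -/
theorem stmt_0 (ℓ k : ℕ) (hℓ : 2 ≤ ℓ) :
    Nat.card {μ : YoungDiagram // IsCore ℓ μ ∧ μ.rowLen 0 = k} =
      (k + ℓ - 2).choose k := by
  calc Nat.card {μ : YoungDiagram // IsCore ℓ μ ∧ μ.rowLen 0 = k}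
      = Nat.card {μ : YoungDiagram // IsCore ℓ μ ∧ μ.colLen 0 = k} :=
        Nat.card_congr <| YoungDiagram.transposeOrderIso.toEquiv.subtypeEquiv fun μ => by
          simp [YoungDiagram.transposeOrderIso, YoungDiagram.isCore_transpose_iff]
    _ = Nat.card {B : Finset ℕ // 0 ∉ B ∧ ClosedUnderSub ℓ B ∧ #B = k} :=
        Nat.card_congr ((YoungDiagram.bijOn_betaSet ℓ k).equiv _)
    _ = Nat.card {c : Fin (ℓ - 1) → ℕ // ∑ t, c t = k} :=
        Nat.card_congr ((bijOn_runnerCount (by omega) k).equiv _)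
    _ = Nat.card (Sym (Fin (ℓ - 1)) k) := Nat.card_congr (Sym.equivNatSumOfFintype _ k).symm
    _ = (k + ℓ - 2).choose k := by
        rw [Sym.natCard_sym_eq_choose, Nat.card_eq_fintype_card, Fintype.card_fin]
        congr 1
        omega
end

section
/- A partition λ is an ℓ-core if and only if for every box (a,b) in the Young diagram of λ, the hook length h_{(a,b)} is not divisible by ℓ. -/
/-- Two cells are adjacent if they share an edge. -/
def AdjCell (p q : ℕ × ℕ) : Prop :=
  (p.1 = q.1 ∧ (p.2 = q.2 + 1 ∨ q.2 = p.2 + 1)) ∨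
  (p.2 = q.2 ∧ (p.1 = q.1 + 1 ∨ q.1 = p.1 + 1))

/-- A finite set of cells is connected if any two of its cells are joined by a
path of edge-adjacent cells inside the set. -/
def ConnectedCells (s : Finset (ℕ × ℕ)) : Prop :=
  ∀ p ∈ s, ∀ q ∈ s,
    Relation.ReflTransGen (fun x y => x ∈ s ∧ y ∈ s ∧ AdjCell x y) p q

/-- A set of cells contains no 2×2 square. -/
def No2x2 (s : Finset (ℕ × ℕ)) : Prop :=
  ¬ ∃ a b : ℕ, (a, b) ∈ s ∧ (a + 1, b) ∈ s ∧ (a, b + 1) ∈ s ∧ (a + 1, b + 1) ∈ s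

/-- `s` is a removable `ℓ`-rim hook of the Young diagram `lam`: a connected set of
`ℓ` cells of `lam`, containing no 2×2 square, whose removal from `lam` leaves the
Young diagram of a partition. -/
def IsRemovableRimHook (ℓ : ℕ) (lam : YoungDiagram) (s : Finset (ℕ × ℕ)) : Prop :=
  ∃ μ : YoungDiagram, μ.cells ⊆ lam.cells ∧ s = lam.cells \ μ.cells ∧
    s.card = ℓ ∧ ConnectedCells s ∧ No2x2 s

/-- A set of cells all lying in a single row. -/
def HorizontalCells (s : Finset (ℕ × ℕ)) : Prop := ∀ p ∈ s, ∀ q ∈ s, p.1 = q.1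

/-- A set of cells all lying in a single column. -/
def VerticalCells (s : Finset (ℕ × ℕ)) : Prop := ∀ p ∈ s, ∀ q ∈ s, p.2 = q.2

/-!
Write `β_i = λ_i - 1 - i` (`beta`) for the content of the last cell of row `i` and
`γ_j = j - λ'_j` (`coBeta`) for the content of the first cell below column `j`. Every integer
is a `β` or a `γ`, and `h(a,b) = β_a - γ_b`. So if `ℓ ∣ h(a,b)` and `ℓ < h(a,b)`, the integer
`γ_b + ℓ` is either some `β_i`, and then `h(i,b) = ℓ`, or some `γ_j`, and then
`h(a,j) = h(a,b) - ℓ`; descending, some hook length equals `ℓ`.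

The cells of `λ` weakly south-east of `(a,b)` whose diagonal successor lies outside `λ` form a
removable rim hook; it meets each diagonal of content in `(γ_b, β_a]` exactly once, so it has
`h(a,b)` cells. Conversely, a removable rim hook is the rim hook of the box in its top row and
leftmost column.
-/

def content (c : ℕ × ℕ) : ℤ := (c.2 : ℤ) - c.1

abbrev CellPath (s : Finset (ℕ × ℕ)) : ℕ × ℕ → ℕ × ℕ → Prop :=
  Relation.ReflTransGen fun x y => x ∈ s ∧ y ∈ s ∧ AdjCell x y

theorem AdjCell.symm {p q : ℕ × ℕ} (h : AdjCell p q) : AdjCell q p := by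
  unfold AdjCell at *
  omega

theorem CellPath.symm {s : Finset (ℕ × ℕ)} {p q : ℕ × ℕ} (h : CellPath s p q) :
    CellPath s q p := by
  induction h with
  | refl => exact .refl
  | tail _ hxy ih => exact ih.head ⟨hxy.2.1, hxy.1, hxy.2.2.symm⟩

theorem CellPath.lt_snd {s : Finset (ℕ × ℕ)} {i j : ℕ} (hs : ∀ x ∈ s, i < x.1 ↔ x.2 ≤ j)
    {p q : ℕ × ℕ} (h : CellPath s p q) (hp : j < p.2) : j < q.2 := by
  induction h with
  | refl => exact hp
  | tail _ hxy ih =>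
    obtain ⟨hx, hy, hadj⟩ := hxy
    have := hs _ hx
    have := hs _ hy
    unfold AdjCell at hadj
    omega

namespace YoungDiagram

variable {lam : YoungDiagram} {a b : ℕ}

def beta (lam : YoungDiagram) (i : ℕ) : ℤ := (lam.rowLen i : ℤ) - 1 - i

def coBeta (lam : YoungDiagram) (j : ℕ) : ℤ := (j : ℤ) - lam.colLen j

theorem hookLen_eq_beta_sub_coBeta (hab : (a, b) ∈ lam) :
    (hookLen lam a b : ℤ) = lam.beta a - lam.coBeta b := by
  have := mem_iff_lt_rowLen.mp hab
  have := mem_iff_lt_colLen.mp hab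
  unfold hookLen beta coBeta
  omega

theorem mem_iff_coBeta_lt_beta : (a, b) ∈ lam ↔ lam.coBeta b < lam.beta a := by
  rw [mem_iff_lt_rowLen, beta, coBeta]
  constructor
  · intro hb
    have := mem_iff_lt_colLen.mp (mem_iff_lt_rowLen.mpr hb)
    omega
  · intro h
    by_contra hb
    have : ¬ a < lam.colLen b := fun ha => hb (mem_iff_lt_rowLen.mp (mem_iff_lt_colLen.mpr ha))
    omega

theorem exists_beta_eq_or_exists_coBeta_eq (y : ℤ) :
    (∃ i, lam.beta i = y) ∨ ∃ j, lam.coBeta j = y := by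
  by_cases hy : ∃ j, lam.coBeta j = y
  · exact Or.inr hy
  push Not at hy
  have hex : ∃ j, y < lam.coBeta j :=
    ⟨(y + lam.colLen 0 + 1).toNat, by
      have := lam.colLen_anti 0 (y + lam.colLen 0 + 1).toNat (Nat.zero_le _)
      unfold coBeta; omega⟩
  -- for the least `j` with `y < coBeta j`, row `i := j - 1 - y` has exactly `j` cells
  obtain ⟨j, hj, hmin⟩ : ∃ j, y < lam.coBeta j ∧ ∀ k < j, lam.coBeta k < y :=
    ⟨Nat.find hex, Nat.find_spec hex,
      fun k hk => lt_of_le_of_ne (not_lt.mp (Nat.find_min hex hk)) (hy k)⟩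
  unfold coBeta at hj hmin
  have hi : (((j : ℤ) - 1 - y).toNat : ℤ) = j - 1 - y := by omega
  set i := ((j : ℤ) - 1 - y).toNat
  have hle : lam.rowLen i ≤ j := by
    by_contra h
    have := mem_iff_lt_colLen.mp (mem_iff_lt_rowLen.mpr (not_le.mp h))
    omega
  have hge : j ≤ lam.rowLen i := by
    rcases Nat.eq_zero_or_pos j with rfl | hj0
    · exact Nat.zero_le _
    have := hmin (j - 1) (by omega)
    have := mem_iff_lt_rowLen.mp
      ((mem_iff_lt_colLen (μ := lam) (i := i) (j := j - 1)).mpr (by omega))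
    omega
  exact Or.inl ⟨i, by unfold beta; omega⟩

theorem exists_hookLen_eq_or_exists_hookLen_add_eq {ℓ : ℕ} (hab : (a, b) ∈ lam)
    (hℓ : 0 < ℓ) (hlt : ℓ < hookLen lam a b) :
    (∃ i, (i, b) ∈ lam ∧ hookLen lam i b = ℓ) ∨
      ∃ j, (a, j) ∈ lam ∧ hookLen lam a j + ℓ = hookLen lam a b := by
  have hhook := hookLen_eq_beta_sub_coBeta hab
  rcases exists_beta_eq_or_exists_coBeta_eq (lam := lam) (lam.coBeta b + ℓ) with ⟨i, hi⟩ | ⟨j, hj⟩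
  · have hib : (i, b) ∈ lam := mem_iff_coBeta_lt_beta.mpr (by omega)
    have := hookLen_eq_beta_sub_coBeta hib
    exact Or.inl ⟨i, hib, by omega⟩
  · have haj : (a, j) ∈ lam := mem_iff_coBeta_lt_beta.mpr (by omega)
    have := hookLen_eq_beta_sub_coBeta haj
    exact Or.inr ⟨j, haj, by omega⟩

theorem exists_hookLen_eq_of_dvd {ℓ : ℕ} (hab : (a, b) ∈ lam)
    (hdvd : ℓ ∣ hookLen lam a b) : ∃ i j, (i, j) ∈ lam ∧ hookLen lam i j = ℓ := by
  induction hn : hookLen lam a b using Nat.strong_induction_on generalizing b with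
  | _ n ih =>
  have hpos : 0 < n := by
    have := mem_iff_lt_rowLen.mp hab
    have := mem_iff_lt_colLen.mp hab
    unfold hookLen at hn
    omega
  subst hn
  have hℓ : 0 < ℓ := Nat.pos_of_dvd_of_pos hdvd hpos
  rcases (Nat.le_of_dvd hpos hdvd).eq_or_lt with heq | hlt
  · exact ⟨a, b, hab, heq.symm⟩
  rcases exists_hookLen_eq_or_exists_hookLen_add_eq hab hℓ hlt with ⟨i, hib, hi⟩ | ⟨j, haj, hj⟩
  · exact ⟨i, b, hib, hi⟩
  · exact ih _ (by omega) haj ((Nat.dvd_add_left dvd_rfl).mp (hj ▸ hdvd)) rfl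

def rimHook (lam : YoungDiagram) (a b : ℕ) : Finset (ℕ × ℕ) :=
  lam.cells.filter fun c => a ≤ c.1 ∧ b ≤ c.2 ∧ (c.1 + 1, c.2 + 1) ∉ lam

theorem mem_rimHook {c : ℕ × ℕ} :
    c ∈ lam.rimHook a b ↔ c ∈ lam ∧ a ≤ c.1 ∧ b ≤ c.2 ∧ (c.1 + 1, c.2 + 1) ∉ lam := by
  simp [rimHook]

def removeRimHook (lam : YoungDiagram) (a b : ℕ) : YoungDiagram where
  cells := lam.cells \ lam.rimHook a b
  isLowerSet := by
    intro c d hdc hc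
    simp only [Finset.coe_sdiff, Set.mem_sdiff, Finset.mem_coe, mem_cells, mem_rimHook] at hc ⊢
    refine ⟨lam.isLowerSet hdc hc.1, fun ⟨_, hda, hdb, hdn⟩ => hc.2 ⟨hc.1, ?_, ?_, ?_⟩⟩
    · exact hda.trans hdc.1
    · exact hdb.trans hdc.2
    · exact fun h => hdn (lam.up_left_mem (Nat.succ_le_succ hdc.1) (Nat.succ_le_succ hdc.2) h)

theorem content_injOn_rimHook : Set.InjOn content (lam.rimHook a b) := by
  intro c hc d hd hcd
  rw [Finset.mem_coe, mem_rimHook] at hc hd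
  unfold content at hcd
  -- two cells on one diagonal would put the cell diagonally below the upper one inside `lam`
  rcases lt_trichotomy c.1 d.1 with h | h | h
  · exact absurd (lam.up_left_mem h (by omega) hd.1) hc.2.2.2
  · exact Prod.ext h (by omega)
  · exact absurd (lam.up_left_mem h (by omega) hc.1) hd.2.2.2

theorem coBeta_lt_content {c : ℕ × ℕ} (hc : c ∈ lam.rimHook a b) : lam.coBeta b < content c := by
  rw [mem_rimHook] at hc
  have := mem_iff_lt_colLen.mp hc.1
  have := lam.colLen_anti b c.2 hc.2.2.1
  unfold coBeta content
  omega

theorem content_le_beta {c : ℕ × ℕ} (hc : c ∈ lam.rimHook a b) : content c ≤ lam.beta a := by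
  rw [mem_rimHook] at hc
  have := mem_iff_lt_rowLen.mp hc.1
  have := lam.rowLen_anti a c.1 hc.2.1
  unfold beta content
  omega

theorem exists_adjCell_mem_rimHook {c : ℕ × ℕ} (hc : c ∈ lam.rimHook a b)
    (hlt : content c < lam.beta a) :
    ∃ d ∈ lam.rimHook a b, AdjCell c d ∧ content d = content c + 1 := by
  obtain ⟨⟨i, j⟩, hc⟩ := c, hc
  rw [mem_rimHook] at hc
  obtain ⟨hmem, hai, hbj, hdiag⟩ := hc
  by_cases hright : (i, j + 1) ∈ lam
  · refine ⟨(i, j + 1), mem_rimHook.mpr ⟨hright, hai, by omega, fun h => hdiag ?_⟩, ?_, ?_⟩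
    · exact lam.up_left_mem le_rfl (Nat.le_succ _) h
    · exact Or.inl ⟨rfl, Or.inr rfl⟩
    · unfold content; push_cast; ring
  · have hai' : a < i := by
      refine lt_of_le_of_ne hai fun hia => ?_
      subst hia
      have := mem_iff_lt_rowLen.not.mp hright
      unfold content beta at hlt
      omega
    refine ⟨(i - 1, j), mem_rimHook.mpr ⟨lam.up_left_mem (Nat.sub_le i 1) le_rfl hmem,
      Nat.le_sub_one_of_lt hai', hbj, by rwa [Nat.sub_add_cancel (show 1 ≤ i by omega)]⟩, ?_, ?_⟩
    · exact Or.inr ⟨rfl, Or.inl (by omega)⟩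
    · unfold content; push_cast [Nat.cast_sub (by omega : 1 ≤ i)]; ring

theorem exists_cellPath_content_eq {c : ℕ × ℕ} (hc : c ∈ lam.rimHook a b) {e : ℤ}
    (hce : content c ≤ e) (he : e ≤ lam.beta a) :
    ∃ d ∈ lam.rimHook a b, content d = e ∧ CellPath (lam.rimHook a b) c d := by
  induction e, hce using Int.leInduction with
  | base => exact ⟨c, hc, rfl, .refl⟩
  | succ e _ ih =>
    obtain ⟨d, hd, hde, hcd⟩ := ih (by omega)
    obtain ⟨d', hd', hdd', hcont⟩ := exists_adjCell_mem_rimHook hd (by omega)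
    exact ⟨d', hd', by omega, hcd.tail ⟨hd, hd', hdd'⟩⟩

theorem colLen_sub_one_mem_rimHook (hab : (a, b) ∈ lam) :
    (lam.colLen b - 1, b) ∈ lam.rimHook a b := by
  have ha := mem_iff_lt_colLen.mp hab
  refine mem_rimHook.mpr ⟨mem_iff_lt_colLen.mpr (by omega), by omega, le_rfl, fun h => ?_⟩
  have := mem_iff_lt_colLen.mp (lam.up_left_mem le_rfl (Nat.le_succ b) h)
  omega

theorem rowLen_sub_one_mem_rimHook (hab : (a, b) ∈ lam) :
    (a, lam.rowLen a - 1) ∈ lam.rimHook a b := by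
  have hb := mem_iff_lt_rowLen.mp hab
  refine mem_rimHook.mpr ⟨mem_iff_lt_rowLen.mpr (by omega), le_rfl, by omega, fun h => ?_⟩
  have := mem_iff_lt_rowLen.mp (lam.up_left_mem (Nat.le_succ a) le_rfl h)
  have := lam.rowLen_anti a (a + 1) (Nat.le_succ a)
  omega

theorem image_content_rimHook (hab : (a, b) ∈ lam) :
    (lam.rimHook a b).image content = Finset.Ioc (lam.coBeta b) (lam.beta a) := by
  ext e
  simp only [Finset.mem_image, Finset.mem_Ioc]
  constructor
  · rintro ⟨c, hc, rfl⟩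
    exact ⟨coBeta_lt_content hc, content_le_beta hc⟩
  · rintro ⟨hlo, hhi⟩
    have hstart := colLen_sub_one_mem_rimHook hab
    have : content (lam.colLen b - 1, b) = lam.coBeta b + 1 := by
      have := mem_iff_lt_colLen.mp hab
      unfold content coBeta
      omega
    obtain ⟨d, hd, hde, -⟩ := exists_cellPath_content_eq hstart (by omega) hhi
    exact ⟨d, hd, hde⟩

theorem card_rimHook (hab : (a, b) ∈ lam) : (lam.rimHook a b).card = hookLen lam a b := by
  rw [← Finset.card_image_of_injOn content_injOn_rimHook, image_content_rimHook hab,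
    Int.card_Ioc, ← hookLen_eq_beta_sub_coBeta hab, Int.toNat_natCast]

theorem connectedCells_rimHook (hab : (a, b) ∈ lam) : ConnectedCells (lam.rimHook a b) := by
  have hend := rowLen_sub_one_mem_rimHook hab
  have hend_content : content (a, lam.rowLen a - 1) = lam.beta a := by
    have := mem_iff_lt_rowLen.mp hab
    unfold content beta
    omega
  -- every cell walks up the rim to the cell of content `beta a`, which is the end of row `a`
  have to_end : ∀ c ∈ lam.rimHook a b, CellPath (lam.rimHook a b) c (a, lam.rowLen a - 1) := by
    intro c hc
    obtain ⟨d, hd, hde, hcd⟩ := exists_cellPath_content_eq hc (content_le_beta hc) le_rfl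
    rwa [content_injOn_rimHook hd hend (hde.trans hend_content.symm)] at hcd
  exact fun p hp q hq => (to_end p hp).trans (to_end q hq).symm

theorem no2x2_rimHook : No2x2 (lam.rimHook a b) := by
  rintro ⟨i, j, hij, -, -, hij'⟩
  exact (mem_rimHook.mp hij).2.2.2 (mem_rimHook.mp hij').1

theorem isRemovableRimHook_rimHook (hab : (a, b) ∈ lam) :
    IsRemovableRimHook (hookLen lam a b) lam (lam.rimHook a b) :=
  ⟨lam.removeRimHook a b, Finset.sdiff_subset,
    (Finset.sdiff_sdiff_eq_self (Finset.filter_subset _ _)).symm, card_rimHook hab,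
    connectedCells_rimHook hab, no2x2_rimHook⟩

theorem mem_cells_sdiff_of_le {μ : YoungDiagram} {c d : ℕ × ℕ}
    (hc : c ∈ lam.cells \ μ.cells) (hd : d ∈ lam) (hcd : c ≤ d) : d ∈ lam.cells \ μ.cells :=
  Finset.mem_sdiff.mpr ⟨hd, fun h => (Finset.mem_sdiff.mp hc).2 (μ.isLowerSet hcd h)⟩

theorem eq_rimHook_of_isRemovableRimHook {ℓ : ℕ} {s : Finset (ℕ × ℕ)}
    (hs : IsRemovableRimHook ℓ lam s) {p q : ℕ × ℕ} (hp : p ∈ s) (hpmin : ∀ c ∈ s, p.1 ≤ c.1)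
    (hq : q ∈ s) (hqmin : ∀ c ∈ s, q.2 ≤ c.2) : s = lam.rimHook p.1 q.2 := by
  obtain ⟨μ, -, rfl, -, hconn, hno⟩ := hs
  ext ⟨i, j⟩
  rw [mem_rimHook]
  constructor
  · intro hc
    have hlam := (mem_cells _).mp (Finset.mem_sdiff.mp hc).1
    refine ⟨hlam, hpmin _ hc, hqmin _ hc, fun hdiag => hno ⟨i, j, hc, ?_, ?_, ?_⟩⟩
    · exact mem_cells_sdiff_of_le hc (lam.up_left_mem le_rfl (Nat.le_succ j) hdiag)
        (Prod.mk_le_mk.mpr ⟨Nat.le_succ i, le_rfl⟩)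
    · exact mem_cells_sdiff_of_le hc (lam.up_left_mem (Nat.le_succ i) le_rfl hdiag)
        (Prod.mk_le_mk.mpr ⟨le_rfl, Nat.le_succ j⟩)
    · exact mem_cells_sdiff_of_le hc hdiag (Prod.mk_le_mk.mpr ⟨Nat.le_succ i, Nat.le_succ j⟩)
  · rintro ⟨hc, hpi, hqj, hdiag⟩
    refine Finset.mem_sdiff.mpr ⟨(mem_cells _).mpr hc, fun hμ => ?_⟩
    -- a cell `(i, j) ∈ μ` would cut `s` into the cells right of column `j` and those below row `i`
    have hμle : ∀ c ∈ lam.cells \ μ.cells, ¬ c ≤ (i, j) :=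
      fun c hc hci => (Finset.mem_sdiff.mp hc).2 (μ.isLowerSet hci hμ)
    have hsplit : ∀ c ∈ lam.cells \ μ.cells, i < c.1 ↔ c.2 ≤ j := by
      intro c hc
      have := hμle c hc
      have : ¬ (i + 1 ≤ c.1 ∧ j + 1 ≤ c.2) := fun h =>
        hdiag (lam.up_left_mem h.1 h.2 ((mem_cells _).mp (Finset.mem_sdiff.mp hc).1))
      rw [Prod.mk_le_mk] at *
      omega
    have hpj : j < p.2 := by
      have := hμle p hp
      rw [Prod.mk_le_mk] at this
      omega
    have := hμle q hq
    rw [Prod.mk_le_mk] at this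
    have := CellPath.lt_snd hsplit (hconn p hp q hq) hpj
    omega

theorem exists_hookLen_eq_of_isRemovableRimHook {ℓ : ℕ} (hℓ : 0 < ℓ) {s : Finset (ℕ × ℕ)}
    (hs : IsRemovableRimHook ℓ lam s) : ∃ a b, (a, b) ∈ lam ∧ hookLen lam a b = ℓ := by
  obtain ⟨-, -, -, hcard, -⟩ := id hs
  have hne : s.Nonempty := Finset.card_pos.mp (hcard ▸ hℓ)
  obtain ⟨p, hp, hpmin⟩ := s.exists_min_image Prod.fst hne
  obtain ⟨q, hq, hqmin⟩ := s.exists_min_image Prod.snd hne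
  have hrim := eq_rimHook_of_isRemovableRimHook hs hp hpmin hq hqmin
  have hmem : (p.1, q.2) ∈ lam :=
    lam.up_left_mem le_rfl (hqmin p hp) (mem_rimHook.mp (hrim ▸ hp)).1
  exact ⟨p.1, q.2, hmem, by rw [← card_rimHook hmem, ← hrim, hcard]⟩

end YoungDiagram

open YoungDiagram in
/-- A partition `λ` is an `ℓ`-core (has no removable `ℓ`-rim hook) if and only if
for every box `(a,b)` of `λ` the hook length `h_{(a,b)}` is not divisible by `ℓ`. -/
theorem stmt_4 (ℓ : ℕ) (hℓ : 2 ≤ ℓ) (lam : YoungDiagram) :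
    (¬ ∃ s : Finset (ℕ × ℕ), IsRemovableRimHook ℓ lam s) ↔
      ∀ a b : ℕ, (a, b) ∈ lam → ¬ ℓ ∣ hookLen lam a b := by
  constructor
  · intro hcore a b hab hdvd
    obtain ⟨i, j, hij, rfl⟩ := exists_hookLen_eq_of_dvd hab hdvd
    exact hcore ⟨_, isRemovableRimHook_rimHook hij⟩
  · rintro hhook ⟨s, hs⟩
    obtain ⟨a, b, hab, rfl⟩ := exists_hookLen_eq_of_isRemovableRimHook (by omega) hs
    exact hhook a b hab dvd_rfl
end

section
/- If λ is a partition that fails the Carter condition (⋆) — i.e., there exist boxes (a,c) and (b,c) in the same column of λ with exactly one of the hook lengths h_{(a,c)}, h_{(b,c)} divisible by ℓ — and μ is obtained from λ by adding a horizontal ℓ-rim hook, then μ also fails condition (⋆). -/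
/-- Carter's condition (⋆): for all pairs of boxes in the same column of `lam`,
`ℓ` divides one hook length iff it divides the other. -/
def StarCond (ℓ : ℕ) (lam : YoungDiagram) : Prop :=
  ∀ a b c : ℕ, (a, c) ∈ lam → (b, c) ∈ lam →
    (ℓ ∣ hookLen lam a c ↔ ℓ ∣ hookLen lam b c)

/-- `b` is obtained from `a` by removing a horizontal `ℓ`-rim hook;
equivalently `a` is obtained from `b` by adding a horizontal `ℓ`-rim hook. -/
def RemoveHorizHook (ℓ : ℕ) (a b : YoungDiagram) : Prop :=
  ∃ s, IsRemovableRimHook ℓ a s ∧ HorizontalCells s ∧ b.cells = a.cells \ s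

/-- A partition is `ℓ`-regular if it has no `ℓ` equal nonzero parts. -/
def Regular (ℓ : ℕ) (lam : YoungDiagram) : Prop :=
  ∀ i : ℕ, lam.rowLen i = lam.rowLen (i + ℓ - 1) → lam.rowLen i = 0

/-- An `ℓ`-partition: an `ℓ`-regular partition each of whose removable `ℓ`-rim hooks
is horizontal, and such that this remains true after removing any sequence of
horizontal `ℓ`-rim hooks. -/
def IsEllPartition (ℓ : ℕ) (lam : YoungDiagram) : Prop :=
  Regular ℓ lam ∧
  ∀ μ : YoungDiagram, Relation.ReflTransGen (RemoveHorizHook ℓ) lam μ →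
    ∀ s, IsRemovableRimHook ℓ μ s → HorizontalCells s


private lemma eq_of_forall_lt_iff' {m n : ℕ} (h : ∀ j, j < m ↔ j < n) : m = n := by
  rcases lt_trichotomy m n with h' | h' | h'
  · exact absurd ((h m).mpr h') (lt_irrefl m)
  · exact h'
  · exact absurd ((h n).mp h') (lt_irrefl n)

private lemma dvd_iff_dvd_of_dvd_sub' {l A B : ℤ} (h : l ∣ A - B) : l ∣ A ↔ l ∣ B :=
  ⟨fun h' => by simpa using dvd_sub h' h, fun h' => by simpa using dvd_add h h'⟩

private lemma hookLen_cast (μ : YoungDiagram) {a b : ℕ} (h : (a, b) ∈ μ) :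
    (hookLen μ a b : ℤ) = (μ.rowLen a : ℤ) + μ.colLen b - a - b - 1 := by
  have h1 : b < μ.rowLen a := YoungDiagram.mem_iff_lt_rowLen.mp h
  have h2 : a < μ.colLen b := YoungDiagram.mem_iff_lt_colLen.mp h
  simp only [hookLen]
  omega

/-- If `lam` fails Carter's condition (⋆) and `μ` is obtained from `lam` by adding a
horizontal `ℓ`-rim hook, then `μ` also fails (⋆). -/
theorem stmt_5 (ℓ : ℕ) (hℓ : 2 ≤ ℓ) (lam μ : YoungDiagram)
    (hfail : ¬ StarCond ℓ lam) (hadd : RemoveHorizHook ℓ μ lam) :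
    ¬ StarCond ℓ μ := by
  intro hstar
  apply hfail
  obtain ⟨s, ⟨ν, hνsub, hsν, hcard, -, -⟩, hhor, hlam⟩ := hadd
  have hsub : ∀ q : ℕ × ℕ, q ∈ lam → q ∈ μ := by
    intro q hq
    have h1 : q ∈ lam.cells := (YoungDiagram.mem_cells q).mpr hq
    rw [hlam] at h1
    exact (YoungDiagram.mem_cells q).mp (Finset.mem_sdiff.mp h1).1
  have hmemiff : ∀ q : ℕ × ℕ, q ∈ μ ↔ (q ∈ lam ∨ q ∈ s) := by
    intro q
    constructor
    · intro hq
      by_cases h' : q ∈ s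
      · exact Or.inr h'
      · left
        rw [← YoungDiagram.mem_cells, hlam, Finset.mem_sdiff]
        exact ⟨(YoungDiagram.mem_cells q).mpr hq, h'⟩
    · rintro (hq | hq)
      · exact hsub q hq
      · have h1 : q ∈ μ.cells \ ν.cells := hsν ▸ hq
        exact (YoungDiagram.mem_cells q).mp (Finset.mem_sdiff.mp h1).1
  have hsnotlam : ∀ q ∈ s, q ∉ lam := by
    intro q hq hql
    have h1 : q ∈ lam.cells := (YoungDiagram.mem_cells q).mpr hql
    rw [hlam, Finset.mem_sdiff] at h1
    exact h1.2 hq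
  have hne : s.Nonempty := by rw [← Finset.card_pos, hcard]; omega
  obtain ⟨p, hp⟩ := hne
  set r := p.1 with hr
  set c := lam.rowLen r with hc
  have hschar : ∀ q : ℕ × ℕ, q ∈ s ↔ q.1 = r ∧ c ≤ q.2 ∧ q.2 < μ.rowLen r := by
    intro q
    constructor
    · intro hq
      have hq1 : q.1 = r := hhor q hq p hp
      have hqμ : (q.1, q.2) ∈ μ := (hmemiff q).mpr (Or.inr hq)
      have hqlam : q ∉ lam := hsnotlam q hq
      rw [YoungDiagram.mem_iff_lt_rowLen, hq1] at hqμ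
      refine ⟨hq1, ?_, hqμ⟩
      by_contra h'
      push_neg at h'
      exact hqlam (show (q.1, q.2) ∈ lam by
        rw [YoungDiagram.mem_iff_lt_rowLen, hq1]; exact h')
    · rintro ⟨h1, h2, h3⟩
      have hqμ : q ∈ μ := by
        show (q.1, q.2) ∈ μ
        rw [YoungDiagram.mem_iff_lt_rowLen, h1]; exact h3
      by_cases h' : q ∈ lam
      · exfalso
        have h4 : (q.1, q.2) ∈ lam := h'
        rw [YoungDiagram.mem_iff_lt_rowLen, h1] at h4
        omega
      · rcases (hmemiff q).mp hqμ with h | h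
        · exact absurd h h'
        · exact h
  have hsimage : s = (Finset.Ico c (μ.rowLen r)).image (fun j => (r, j)) := by
    ext q
    simp only [Finset.mem_image, Finset.mem_Ico, hschar]
    constructor
    · rintro ⟨h1, h2, h3⟩
      exact ⟨q.2, ⟨h2, h3⟩, by rw [← h1]⟩
    · rintro ⟨j, ⟨h2, h3⟩, rfl⟩
      exact ⟨rfl, h2, h3⟩
  have hm : μ.rowLen r = c + ℓ := by
    have hpc := (hschar p).mp hp
    have hinj : Function.Injective (fun j : ℕ => (r, j)) := by
      intro x y h; simpa using h
    have hcard' := hcard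
    rw [hsimage, Finset.card_image_of_injective _ hinj, Nat.card_Ico] at hcard'
    omega
  have hrowEq : ∀ a, a ≠ r → μ.rowLen a = lam.rowLen a := by
    intro a ha
    apply eq_of_forall_lt_iff'
    intro j
    rw [← YoungDiagram.mem_iff_lt_rowLen, ← YoungDiagram.mem_iff_lt_rowLen, hmemiff]
    constructor
    · rintro (h | h)
      · exact h
      · have h1 : a = r := ((hschar _).mp h).1
        exact absurd h1 ha
    · exact Or.inl
  have hcolIn : ∀ y, c ≤ y → y < c + ℓ → μ.colLen y = r + 1 ∧ lam.colLen y = r := by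
    intro y h1 h2
    have hry : (r, y) ∈ μ := YoungDiagram.mem_iff_lt_rowLen.mpr (by omega)
    have hμge : r + 1 ≤ μ.colLen y := YoungDiagram.mem_iff_lt_colLen.mp hry
    have hnotlam : (r, y) ∉ lam := by
      rw [YoungDiagram.mem_iff_lt_rowLen]; omega
    have hμle : μ.colLen y ≤ r + 1 := by
      by_contra h'
      push_neg at h'
      have h3 : (r + 1, y) ∈ μ := YoungDiagram.mem_iff_lt_colLen.mpr (by omega)
      rcases (hmemiff _).mp h3 with h | h
      · exact hnotlam (lam.up_left_mem (by omega) le_rfl h)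
      · have h4 : r + 1 = r := ((hschar _).mp h).1
        omega
    have hlamle : lam.colLen y ≤ r := by
      by_contra h'
      push_neg at h'
      exact hnotlam (YoungDiagram.mem_iff_lt_colLen.mpr h')
    have hlamge : r ≤ lam.colLen y := by
      rcases Nat.eq_zero_or_pos r with hr0 | hr0
      · omega
      · have h3 : (r - 1, y) ∈ μ := μ.up_left_mem (by omega) le_rfl hry
        rcases (hmemiff _).mp h3 with h | h
        · have h4 := YoungDiagram.mem_iff_lt_colLen.mp h
          omega
        · have h4 : r - 1 = r := ((hschar _).mp h).1
          omega
    exact ⟨by omega, by omega⟩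
  have hcolOut : ∀ y, y < c ∨ c + ℓ ≤ y → μ.colLen y = lam.colLen y := by
    intro y hy
    apply eq_of_forall_lt_iff'
    intro i
    rw [← YoungDiagram.mem_iff_lt_colLen, ← YoungDiagram.mem_iff_lt_colLen, hmemiff]
    constructor
    · rintro (h | h)
      · exact h
      · have h1 : c ≤ y := ((hschar _).mp h).2.1
        have h2 : y < μ.rowLen r := ((hschar _).mp h).2.2
        omega
    · exact Or.inl
  have hB : ∀ a, a ≤ r → ∀ b, b ≤ r →
      (ℓ : ℤ) ∣ ((μ.rowLen a : ℤ) - a) - ((μ.rowLen b : ℤ) - b) := by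
    have key : ∀ a, a ≤ r → ∃ y, c ≤ y ∧ y < c + ℓ ∧ (a, y) ∈ μ ∧
        (ℓ : ℤ) ∣ ((μ.rowLen a : ℤ) - a + r - y) := by
      intro a ha
      set X : ℤ := (μ.rowLen a : ℤ) - a + r - c with hX
      set t : ℤ := X % ℓ with ht
      have hl0 : (0 : ℤ) < ℓ := by exact_mod_cast (by omega : 0 < ℓ)
      have h1 : 0 ≤ t := Int.emod_nonneg X (by omega)
      have h2 : t < ℓ := Int.emod_lt_of_pos X hl0
      have hylt : c + t.toNat < c + ℓ := by omega
      have hmem : (a, c + t.toNat) ∈ μ := by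
        rw [YoungDiagram.mem_iff_lt_rowLen]
        have h3 := μ.rowLen_anti a r ha
        omega
      refine ⟨c + t.toNat, by omega, hylt, hmem, ⟨X / ℓ, ?_⟩⟩
      have hdm := Int.mul_ediv_add_emod X ℓ
      have hcast : ((c + t.toNat : ℕ) : ℤ) = (c : ℤ) + t := by push_cast; omega
      rw [hcast]
      rw [← ht] at hdm
      linarith
    intro a ha b hb
    obtain ⟨y, hy1, hy2, hmem_a, hdvd_a⟩ := key a ha
    have hmem_b : (b, y) ∈ μ := by
      rw [YoungDiagram.mem_iff_lt_rowLen]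
      have h3 := μ.rowLen_anti b r hb
      omega
    have hcy : μ.colLen y = r + 1 := (hcolIn y hy1 hy2).1
    have hha : (hookLen μ a y : ℤ) = (μ.rowLen a : ℤ) - a + r - y := by
      rw [hookLen_cast μ hmem_a, hcy]; push_cast; ring
    have hhb : (hookLen μ b y : ℤ) = (μ.rowLen b : ℤ) - b + r - y := by
      rw [hookLen_cast μ hmem_b, hcy]; push_cast; ring
    have hdvd_hook_a : ℓ ∣ hookLen μ a y := by
      have h3 : (ℓ : ℤ) ∣ (hookLen μ a y : ℤ) := by rw [hha]; exact hdvd_a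
      exact_mod_cast h3
    have hdvd_hook_b : ℓ ∣ hookLen μ b y := (hstar a b y hmem_a hmem_b).mp hdvd_hook_a
    have hdvd_b : (ℓ : ℤ) ∣ ((μ.rowLen b : ℤ) - b + r - y) := by
      rw [← hhb]; exact_mod_cast hdvd_hook_b
    have hsb := dvd_sub hdvd_a hdvd_b
    have heq : ((μ.rowLen a : ℤ) - a + r - y) - ((μ.rowLen b : ℤ) - b + r - y)
        = ((μ.rowLen a : ℤ) - a) - ((μ.rowLen b : ℤ) - b) := by ring
    rwa [heq] at hsb
  intro a b x hax hbx
  by_cases hx : c ≤ x ∧ x < c + ℓ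
  · have hcl : lam.colLen x = r := (hcolIn x hx.1 hx.2).2
    have haltr : a < r := by rw [← hcl]; exact YoungDiagram.mem_iff_lt_colLen.mp hax
    have hbltr : b < r := by rw [← hcl]; exact YoungDiagram.mem_iff_lt_colLen.mp hbx
    have hBa := hB a (le_of_lt haltr) b (le_of_lt hbltr)
    have hra : μ.rowLen a = lam.rowLen a := hrowEq a (by omega)
    have hrb : μ.rowLen b = lam.rowLen b := hrowEq b (by omega)
    have hha : (hookLen lam a x : ℤ) = (lam.rowLen a : ℤ) - a + r - x - 1 := by
      rw [hookLen_cast lam hax, hcl]; push_cast; ring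
    have hhb : (hookLen lam b x : ℤ) = (lam.rowLen b : ℤ) - b + r - x - 1 := by
      rw [hookLen_cast lam hbx, hcl]; push_cast; ring
    have hdiff : (ℓ : ℤ) ∣ ((hookLen lam a x : ℤ) - (hookLen lam b x : ℤ)) := by
      rw [hha, hhb]
      have heq : ((lam.rowLen a : ℤ) - a + r - x - 1) - ((lam.rowLen b : ℤ) - b + r - x - 1)
          = ((μ.rowLen a : ℤ) - a) - ((μ.rowLen b : ℤ) - b) := by rw [hra, hrb]; ring
      rw [heq]; exact hBa
    rw [← Int.natCast_dvd_natCast (m := ℓ) (n := hookLen lam a x),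
        ← Int.natCast_dvd_natCast (m := ℓ) (n := hookLen lam b x)]
    exact dvd_iff_dvd_of_dvd_sub' hdiff
  · have hx' : x < c ∨ c + ℓ ≤ x := by omega
    have hcol := hcolOut x hx'
    have key : ∀ i, (i, x) ∈ lam → (ℓ ∣ hookLen lam i x ↔ ℓ ∣ hookLen μ i x) := by
      intro i hi
      have hiμ : (i, x) ∈ μ := hsub _ hi
      have hdiff : (ℓ : ℤ) ∣ (hookLen μ i x : ℤ) - (hookLen lam i x : ℤ) := by
        rw [hookLen_cast μ hiμ, hookLen_cast lam hi, hcol]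
        by_cases hir : i = r
        · subst hir
          rw [hm]
          exact ⟨1, by push_cast; ring⟩
        · rw [hrowEq i hir]
          exact ⟨0, by ring⟩
      rw [← Int.natCast_dvd_natCast (m := ℓ) (n := hookLen lam i x),
          ← Int.natCast_dvd_natCast (m := ℓ) (n := hookLen μ i x)]
      exact (dvd_iff_dvd_of_dvd_sub' hdiff).symm
    rw [key a hax, key b hbx]
    exact hstar a b x (hsub _ hax) (hsub _ hbx)
end

section
/- If λ is an ℓ-core and r > 0, then the partition ν = (λ_1 + r(ℓ-1), λ_1 + (r-1)(ℓ-1), ..., λ_1 + (ℓ-1), λ_1, λ_2, λ_3, ...) obtained by prepending r rows whose successive differences are ℓ-1 is again an ℓ-core. -/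
/-!
Let `m = ℓ - 1` and `L = λ₁`. A box of `ν` in the lower block sees exactly the arm and leg it has
in `λ`. A box `(a, b)` in the first `r` rows with `b < L` has the hook of the box `(0, b)` of `λ`
lengthened by `(r - a) ℓ`: the arm grows by `(r - a) m` and the leg by `r - a`. A box `(a, b)` with
`b ≥ L`, written `b - L = q m + s` with `s < m`, has hook `(r - a - q) ℓ - (s + 1)`, and
`0 < s + 1 < ℓ`. So no hook of `ν` is divisible by `ℓ`.
-/

lemma YoungDiagram.colLen_eq_of_forall_mem_iff {μ : YoungDiagram} {b c : ℕ}
    (h : ∀ i, (i, b) ∈ μ ↔ i < c) : μ.colLen b = c :=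
  eq_of_forall_lt_iff fun i => by rw [← YoungDiagram.mem_iff_lt_colLen, h]

lemma hookLen_add_add_add_one {μ : YoungDiagram} {a b : ℕ} (h : (a, b) ∈ μ) :
    hookLen μ a b + a + b + 1 = μ.rowLen a + μ.colLen b := by
  have hrow := YoungDiagram.mem_iff_lt_rowLen.mp h
  have hcol := YoungDiagram.mem_iff_lt_colLen.mp h
  unfold hookLen
  omega

structure IsStaircaseExtension (m r : ℕ) (lam ν : YoungDiagram) : Prop where
  rowLen_of_lt : ∀ i < r, ν.rowLen i = lam.rowLen 0 + (r - i) * m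
  rowLen_add : ∀ i, ν.rowLen (r + i) = lam.rowLen i

namespace IsStaircaseExtension

variable {m r : ℕ} {lam ν : YoungDiagram} {a b j : ℕ}

lemma mem_add_iff (hν : IsStaircaseExtension m r lam ν) : (r + j, b) ∈ ν ↔ (j, b) ∈ lam := by
  simp only [YoungDiagram.mem_iff_lt_rowLen, hν.rowLen_add]

lemma mem_iff_of_lt (hν : IsStaircaseExtension m r lam ν) (ha : a < r) :
    (a, b) ∈ ν ↔ b < lam.rowLen 0 + (r - a) * m := by
  rw [YoungDiagram.mem_iff_lt_rowLen, hν.rowLen_of_lt a ha]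

lemma not_mem_of_le (hν : IsStaircaseExtension m r lam ν) (ha : r ≤ a) (hb : lam.rowLen 0 ≤ b) :
    (a, b) ∉ ν := by
  obtain ⟨j, rfl⟩ := Nat.exists_eq_add_of_le ha
  rw [hν.mem_add_iff, YoungDiagram.mem_iff_lt_rowLen, not_lt]
  exact (lam.rowLen_anti 0 j j.zero_le).trans hb

lemma colLen_of_lt (hν : IsStaircaseExtension m r lam ν) (hb : b < lam.rowLen 0) :
    ν.colLen b = r + lam.colLen b := by
  refine YoungDiagram.colLen_eq_of_forall_mem_iff fun i => ?_
  rcases Nat.lt_or_ge i r with hi | hi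
  · rw [hν.mem_iff_of_lt hi]
    omega
  · obtain ⟨j, rfl⟩ := Nat.exists_eq_add_of_le hi
    rw [hν.mem_add_iff, YoungDiagram.mem_iff_lt_colLen]
    omega

lemma colLen_of_le (hν : IsStaircaseExtension m r lam ν) (hm : 0 < m) (hb : lam.rowLen 0 ≤ b) :
    ν.colLen b = r - (b - lam.rowLen 0) / m := by
  refine YoungDiagram.colLen_eq_of_forall_mem_iff fun i => ?_
  rcases Nat.lt_or_ge i r with hi | hi
  · rw [hν.mem_iff_of_lt hi, Nat.lt_sub_iff_add_lt, ← Nat.lt_sub_iff_add_lt',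
      Nat.div_lt_iff_lt_mul hm]
    omega
  · simp only [hν.not_mem_of_le hi hb, false_iff, not_lt]
    exact (Nat.sub_le _ _).trans hi

lemma hookLen_add (hν : IsStaircaseExtension m r lam ν) (h : (j, b) ∈ lam) :
    hookLen ν (r + j) b = hookLen lam j b := by
  have hb : b < lam.rowLen 0 :=
    (YoungDiagram.mem_iff_lt_rowLen.mp h).trans_le (lam.rowLen_anti 0 j j.zero_le)
  have hν' := hookLen_add_add_add_one (hν.mem_add_iff.mpr h)
  have hlam := hookLen_add_add_add_one h
  rw [hν.rowLen_add, hν.colLen_of_lt hb] at hν'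
  omega

lemma hookLen_of_lt_of_lt (hν : IsStaircaseExtension m r lam ν) (ha : a < r)
    (hb : b < lam.rowLen 0) : hookLen ν a b = hookLen lam 0 b + (r - a) * (m + 1) := by
  have hab : (a, b) ∈ ν := (hν.mem_iff_of_lt ha).mpr (by omega)
  have hν' := hookLen_add_add_add_one hab
  have hlam := hookLen_add_add_add_one (YoungDiagram.mem_iff_lt_rowLen.mpr hb)
  rw [hν.rowLen_of_lt a ha, hν.colLen_of_lt hb] at hν'
  rw [Nat.mul_succ]
  omega

lemma hookLen_add_mod_add_one (hν : IsStaircaseExtension m r lam ν) (hm : 0 < m)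
    (h : (a, b) ∈ ν) (ha : a < r) (hb : lam.rowLen 0 ≤ b) :
    hookLen ν a b + ((b - lam.rowLen 0) % m + 1) =
      (r - a - (b - lam.rowLen 0) / m) * (m + 1) := by
  set q := (b - lam.rowLen 0) / m
  have hdiv := Nat.div_add_mod (b - lam.rowLen 0) m
  have hq : q < r - a := by
    rw [Nat.div_lt_iff_lt_mul hm]
    have := (hν.mem_iff_of_lt ha).mp h
    omega
  have hν' := hookLen_add_add_add_one h
  rw [hν.rowLen_of_lt a ha, hν.colLen_of_le hm hb] at hν'
  have hsplit : (r - a) * m = (r - a - q) * m + q * m := by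
    rw [← Nat.add_mul, Nat.sub_add_cancel hq.le]
  rw [Nat.mul_comm m q] at hdiv
  rw [Nat.mul_succ]
  omega

end IsStaircaseExtension

theorem stmt_7_general (ℓ r : ℕ) (hℓ : 2 ≤ ℓ) (lam ν : YoungDiagram)
    (hcore : IsCore ℓ lam)
    (h1 : ∀ i < r, ν.rowLen i = lam.rowLen 0 + (r - i) * (ℓ - 1))
    (h2 : ∀ i : ℕ, ν.rowLen (r + i) = lam.rowLen i) :
    IsCore ℓ ν := by
  obtain ⟨m, rfl⟩ : ∃ m, ℓ = m + 1 := ⟨ℓ - 1, by omega⟩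
  have hν : IsStaircaseExtension m r lam ν := ⟨by simpa using h1, h2⟩
  intro a b hab hdvd
  rcases Nat.lt_or_ge a r with ha | ha
  · rcases Nat.lt_or_ge b (lam.rowLen 0) with hb | hb
    · rw [hν.hookLen_of_lt_of_lt ha hb] at hdvd
      exact hcore 0 b (YoungDiagram.mem_iff_lt_rowLen.mpr hb)
        ((Nat.dvd_add_left (dvd_mul_left _ _)).mp hdvd)
    · have hm : 0 < m := by omega
      have hgap := (Nat.dvd_add_right hdvd).mp
        (hν.hookLen_add_mod_add_one hm hab ha hb ▸ dvd_mul_left _ _)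
      have := Nat.le_of_dvd (Nat.succ_pos _) hgap
      have := Nat.mod_lt (b - lam.rowLen 0) hm
      omega
  · obtain ⟨j, rfl⟩ := Nat.exists_eq_add_of_le ha
    have hj := hν.mem_add_iff.mp hab
    exact hcore j b hj (hν.hookLen_add hj ▸ hdvd)

/-- If `lam` is an `ℓ`-core and `r > 0`, then the partition `ν` obtained by prepending
`r` rows above `lam` with successive differences `ℓ - 1` (so `ν_i = λ₁ + (r-i)(ℓ-1)` in
0-indexed rows `i < r`, and `ν_{r+i} = λ_i`) is again an `ℓ`-core. -/
theorem stmt_7 (ℓ r : ℕ) (hℓ : 2 ≤ ℓ) (hr : 0 < r) (lam ν : YoungDiagram)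
    (hcore : IsCore ℓ lam)
    (h1 : ∀ i < r, ν.rowLen i = lam.rowLen 0 + (r - i) * (ℓ - 1))
    (h2 : ∀ i : ℕ, ν.rowLen (r + i) = lam.rowLen i) :
    IsCore ℓ ν :=
  stmt_7_general ℓ r hℓ lam ν hcore h1 h2
end
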